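/- arXiv:cs/0507059 — 2 statements merged into one kernel-verified Lean document; each statement's English description precedes it below -/
import Mathlib

section
/- Let R be a preorder (reflexive transitive relation) on a set of roles, and define the closure of an edge-extension function E : Roles → P(S × S) by Ê(R) = transitive closure of E(R) if R is transitive, and Ê(R) = E(R) ∪ ⋃_{P ⊏ R} Ê(P) otherwise. If E satisfies (s,t) ∈ E(P) and P ⊑ R implies (s,t) ∈ E(R), then for all roles P ⊑ R, Ê(P) ⊆ Ê(R), provided the role hierarchy is acyclic above transitive roles; hence the canonical interpretation satisfies all role inclusion axioms. -/
/-!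
Below a transitive role `R`, every closure `Ê(P)` with `P ⊑ R` lies inside the transitive closure
of `E(R)`: by well-founded induction on `P`, either `Ê(P)` is the transitive closure of
`E(P) ⊆ E(R)`, or it is `E(P)` together with the closures of strictly smaller roles. For a
non-transitive `R` the inclusion `Ê(P) ⊆ Ê(R)` is built into the definition of `Ê(R)`.
-/

theorem hatE_le_transGen {Role S : Type}
    (sub : Role → Role → Prop) (isTrans : Role → Prop) (E hatE : Role → S → S → Prop)
    (htrans : ∀ P Q R, sub P Q → sub Q R → sub P R)
    (hwf : WellFounded (fun P R => sub P R ∧ P ≠ R))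
    (hmono : ∀ P R s t, E P s t → sub P R → E R s t)
    (hhatTrans : ∀ R, isTrans R → ∀ s t, hatE R s t ↔ Relation.TransGen (E R) s t)
    (hhatNonTrans : ∀ R, ¬ isTrans R →
      ∀ s t, hatE R s t ↔ E R s t ∨ ∃ P, sub P R ∧ P ≠ R ∧ hatE P s t)
    (P R : Role) (hPR : sub P R) {s t : S} (h : hatE P s t) :
    Relation.TransGen (E R) s t := by
  induction P using hwf.induction generalizing s t with
  | _ P ih =>
    by_cases hP : isTrans P
    · rw [hhatTrans P hP] at h
      exact Relation.TransGen.mono (fun a b hab => hmono P R a b hab hPR) s t h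
    · rcases (hhatNonTrans P hP s t).1 h with hE | ⟨Q, hQP, hQne, hQ⟩
      · exact .single (hmono P R s t hE hPR)
      · exact ih Q ⟨hQP, hQne⟩ (htrans Q P R hQP hPR) hQ

theorem stmt_8_general {Role S : Type}
    (sub : Role → Role → Prop) (isTrans : Role → Prop)
    (E hatE : Role → S → S → Prop)
    (htrans : ∀ P Q R, sub P Q → sub Q R → sub P R)
    (hwf : WellFounded (fun P R => sub P R ∧ P ≠ R))
    (hmono : ∀ P R s t, E P s t → sub P R → E R s t)
    (hhatTrans : ∀ R, isTrans R →
      ∀ s t, hatE R s t ↔ Relation.TransGen (E R) s t)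
    (hhatNonTrans : ∀ R, ¬ isTrans R →
      ∀ s t, hatE R s t ↔ E R s t ∨ ∃ P, sub P R ∧ P ≠ R ∧ hatE P s t) :
    ∀ P R, sub P R → ∀ s t, hatE P s t → hatE R s t := by
  intro P R hPR s t h
  by_cases hR : isTrans R
  · exact (hhatTrans R hR s t).2 <|
      hatE_le_transGen sub isTrans E hatE htrans hwf hmono hhatTrans hhatNonTrans P R hPR h
  · by_cases hPR' : P = R
    · exact hPR' ▸ h
    · exact (hhatNonTrans R hR s t).2 (.inr ⟨P, hPR, hPR', h⟩)

/-- The closure `Ê` of the edge extension function (transitive closure for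
transitive roles, union with the closures of proper sub-roles otherwise)
preserves role subsumption: if `P ⊑ R` then `Ê(P) ⊆ Ê(R)`, provided the role
hierarchy is an acyclic (antisymmetric, well-founded) preorder and `E` is
monotone along `⊑`. Hence the canonical interpretation satisfies all role
inclusion axioms. -/
theorem stmt_8 {Role S : Type}
    (sub : Role → Role → Prop) (isTrans : Role → Prop)
    (E hatE : Role → S → S → Prop)
    (hrefl : ∀ R, sub R R)
    (htrans : ∀ P Q R, sub P Q → sub Q R → sub P R)
    (hantisymm : ∀ P R, sub P R → sub R P → P = R)
    (hwf : WellFounded (fun P R => sub P R ∧ P ≠ R))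
    (hmono : ∀ P R s t, E P s t → sub P R → E R s t)
    (hhatTrans : ∀ R, isTrans R →
      ∀ s t, hatE R s t ↔ Relation.TransGen (E R) s t)
    (hhatNonTrans : ∀ R, ¬ isTrans R →
      ∀ s t, hatE R s t ↔ E R s t ∨ ∃ P, sub P R ∧ P ≠ R ∧ hatE P s t) :
    ∀ P R, sub P R → ∀ s t, hatE P s t → hatE R s t :=
  stmt_8_general sub isTrans E hatE htrans hwf hmono hhatTrans hhatNonTrans
end

section
/- Let I be a model of a completion forest F, and suppose the ≤-rule identifies two neighbor nodes y and z of x with ¬(y ≠ z) recorded in F. If I(y) = I(z), then I is a model of the forest F' obtained by merging y into z (taking unions of labels and redirecting edges). -/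
/-- Model preservation under node merging (`≤`-rule): if `I` is a model of
the forest `F`, `¬(y ≠ z)` is recorded in `F`, and `I(y) = I(z)`, then `I` is
a model of the forest `F'` obtained by merging `y` into `z` (union of labels,
edges redirected to `z`, `y`'s labels emptied, inequalities transferred). -/
theorem stmt_14 {Node Concept Role D : Type}
    (L : Node → Set Concept) (E : Node → Node → Set Role)
    (neq : Node → Node → Prop)
    (val : Node → D) (cext : Concept → Set D) (rext : Role → Set (D × D))
    (y z : Node) (hyz : y ≠ z)
    (hm1 : ∀ x C, C ∈ L x → val x ∈ cext C)
    (hm2 : ∀ a b R, R ∈ E a b → (val a, val b) ∈ rext R)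
    (hm3 : ∀ a b, neq a b → val a ≠ val b)
    (hnotneq : ¬ neq y z)
    (heq : val y = val z) :
    (∀ x C, (x ≠ y ∧ (C ∈ L x ∨ (x = z ∧ C ∈ L y))) → val x ∈ cext C) ∧
    (∀ a b R, (a ≠ y ∧ b ≠ y ∧
        (R ∈ E a b ∨ (a = z ∧ R ∈ E y b) ∨ (b = z ∧ R ∈ E a y))) →
      (val a, val b) ∈ rext R) ∧
    (∀ a b, (neq a b ∨ (a = z ∧ neq y b) ∨ (b = z ∧ neq a y)) →
      val a ≠ val b) := by
  refine ⟨?_, ?_, ?_⟩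
  · rintro x C ⟨hx, h | ⟨rfl, h⟩⟩
    · exact hm1 x C h
    · rw [← heq]; exact hm1 y C h
  · rintro a b R ⟨ha, hb, h | ⟨rfl, h⟩ | ⟨rfl, h⟩⟩
    · exact hm2 a b R h
    · have := hm2 y b R h; rwa [heq] at this
    · have := hm2 a y R h; rwa [heq] at this
  · rintro a b (h | ⟨rfl, h⟩ | ⟨rfl, h⟩)
    · exact hm3 a b h
    · have := hm3 y b h; rwa [heq] at this
    · have := hm3 a y h; rwa [heq] at this
end
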